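/- For all integers k ≥ 1, ∑_{y=k}^{x-1} f(k)f(k+1)/(f(y)f(y+1)) = f(k)f(k+1)·(h(x) − h(k))/(10 h(k) h(x)) for all x > k, where f(y) = y(y+3)(2y+3) and h(y) = y(y+1)(y+2)(y+3)(2y+3). -/
import Mathlib


noncomputable def f (y : ℝ) : ℝ := y * (y + 3) * (2 * y + 3)

noncomputable def h (y : ℝ) : ℝ := y * (y + 1) * (y + 2) * (y + 3) * (2 * y + 3)

lemma f_pos {y : ℝ} (hy : 1 ≤ y) : 0 < f y := by
  have : 0 < y := by linarith
  unfold f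
  have h1 : 0 < y + 3 := by linarith
  have h2 : 0 < 2 * y + 3 := by linarith
  positivity

lemma h_pos {y : ℝ} (hy : 1 ≤ y) : 0 < h y := by
  have : 0 < y := by linarith
  unfold h
  have h1 : 0 < y + 1 := by linarith
  have h2 : 0 < y + 2 := by linarith
  have h3 : 0 < y + 3 := by linarith
  have h4 : 0 < 2 * y + 3 := by linarith
  positivity

lemma key {y : ℝ} (hy : 1 ≤ y) :
    1 / (f y * f (y + 1)) = 1 / (10 * h y) - 1 / (10 * h (y + 1)) := by
  have h1 := (f_pos hy).ne'
  have h2 := (f_pos (by linarith : (1:ℝ) ≤ y + 1)).ne'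
  have h3 := (h_pos hy).ne'
  have h4 := (h_pos (by linarith : (1:ℝ) ≤ y + 1)).ne'
  field_simp
  unfold f h
  ring

lemma tele (k x : ℕ) (hk : 1 ≤ k) (hx : k < x) :
    ∑ y ∈ Finset.Ico k x, 1 / (f y * f ((y : ℝ) + 1))
      = 1 / (10 * h k) - 1 / (10 * h x) := by
  induction x with
  | zero => omega
  | succ n ih =>
    rcases Nat.lt_or_ge k n with hn | hn
    · rw [Finset.sum_Ico_succ_top (by omega), ih hn, key (by exact_mod_cast hn.le.trans' hk)]
      push_cast; ring
    · have : k = n := by omega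
      subst this
      rw [Finset.sum_Ico_succ_top (le_refl k), Finset.Ico_self, Finset.sum_empty,
        key (by exact_mod_cast hk)]
      push_cast; ring

/-- Telescoping identity: for integers `1 ≤ k < x`,
`∑_{y=k}^{x-1} f(k)f(k+1)/(f(y)f(y+1)) = f(k)f(k+1)(h(x)−h(k))/(10h(k)h(x))`. -/
theorem stmt_13 (k x : ℕ) (hk : 1 ≤ k) (hx : k < x) :
    ∑ y ∈ Finset.Ico k x, f k * f ((k : ℝ) + 1) / (f y * f ((y : ℝ) + 1))
      = f k * f ((k : ℝ) + 1) * (h x - h k) / (10 * h k * h x) := by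
  have hhk := (h_pos (by exact_mod_cast hk : (1:ℝ) ≤ k)).ne'
  have hhx := (h_pos (by exact_mod_cast hk.trans hx.le : (1:ℝ) ≤ x)).ne'
  have := tele k x hk hx
  calc ∑ y ∈ Finset.Ico k x, f k * f ((k : ℝ) + 1) / (f y * f ((y : ℝ) + 1))
      = f k * f ((k : ℝ) + 1) * ∑ y ∈ Finset.Ico k x, 1 / (f y * f ((y : ℝ) + 1)) := by
        rw [Finset.mul_sum]; congr 1; ext y; ring
    _ = f k * f ((k : ℝ) + 1) * (1 / (10 * h k) - 1 / (10 * h x)) := by rw [this]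
    _ = f k * f ((k : ℝ) + 1) * (h x - h k) / (10 * h k * h x) := by
        field_simp
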